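/- arXiv:1707.01164 — 2 statements merged into one kernel-verified Lean document; each statement's English description precedes it below -/
import Mathlib

section
/- Let (Ω, ℱ₀, P) be a probability space, let 𝒢 ⊆ ℱ ⊆ ℱ₀ be nested sub-σ-algebras, and let Z : Ω → ℝ be square-integrable. Then E[Var(Z | ℱ)] = E[Var(Z | 𝒢)] if and only if E[Z | ℱ] = E[Z | 𝒢] almost surely. -/
open MeasureTheory

/-- The expected conditional variance `E[Var(Z | m)] = E[(Z − E[Z|m])²]` of a real-valued
random variable `Z` given a sub-σ-algebra `m`. -/
noncomputable def expCondVar {Ω : Type*} {m0 : MeasurableSpace Ω} (μ : Measure Ω)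
    (m : MeasurableSpace Ω) (Z : Ω → ℝ) : ℝ :=
  ∫ ω, (Z ω - (μ[Z|m]) ω) ^ 2 ∂μ

/-!
Write `Z − E[Z|𝒢] = (Z − E[Z|ℱ]) + (E[Z|ℱ] − E[Z|𝒢])`. The residual `Z − E[Z|ℱ]` is orthogonal
in `L²` to every square-integrable `ℱ`-measurable function, in particular to the second summand,
so by Pythagoras `E[Var(Z|𝒢)] = E[Var(Z|ℱ)] + E[(E[Z|ℱ] − E[Z|𝒢])²]`. The last term vanishes
exactly when `E[Z|ℱ] = E[Z|𝒢]` almost surely.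
-/

section

variable {Ω : Type*} {m m0 : MeasurableSpace Ω} {μ : Measure Ω}

theorem integral_add_sq_of_integral_mul_eq_zero {f g : Ω → ℝ} (hf : MemLp f 2 μ)
    (hg : MemLp g 2 μ) (hfg : ∫ ω, f ω * g ω ∂μ = 0) :
    ∫ ω, (f ω + g ω) ^ 2 ∂μ = ∫ ω, f ω ^ 2 ∂μ + ∫ ω, g ω ^ 2 ∂μ := by
  have hfg_int : Integrable (fun ω => 2 * (f ω * g ω)) μ := (hf.integrable_mul hg).const_mul 2
  calc ∫ ω, (f ω + g ω) ^ 2 ∂μ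
      = ∫ ω, (f ω ^ 2 + 2 * (f ω * g ω)) + g ω ^ 2 ∂μ := by congr with ω; ring
    _ = ∫ ω, f ω ^ 2 ∂μ + 2 * ∫ ω, f ω * g ω ∂μ + ∫ ω, g ω ^ 2 ∂μ := by
      rw [integral_add (f := fun ω => f ω ^ 2 + 2 * (f ω * g ω))
        (hf.integrable_sq.add hfg_int) hg.integrable_sq,
        integral_add hf.integrable_sq hfg_int, integral_const_mul]
    _ = ∫ ω, f ω ^ 2 ∂μ + ∫ ω, g ω ^ 2 ∂μ := by rw [hfg]; ring

theorem condExp_sub_condExp_ae_eq_zero (hm : m ≤ m0) [SigmaFinite (μ.trim hm)] {Z : Ω → ℝ}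
    (hZ : Integrable Z μ) : μ[Z - μ[Z|m] | m] =ᵐ[μ] 0 := by
  filter_upwards [condExp_sub hZ integrable_condExp m] with ω hω
  rw [hω, Pi.sub_apply,
    condExp_of_stronglyMeasurable hm stronglyMeasurable_condExp integrable_condExp, sub_self]
  rfl

theorem integral_mul_sub_condExp_eq_zero (hm : m ≤ m0) [IsFiniteMeasure μ] {Y Z : Ω → ℝ}
    (hY : AEStronglyMeasurable[m] Y μ) (hY2 : MemLp Y 2 μ) (hZ : MemLp Z 2 μ) :
    ∫ ω, Y ω * (Z ω - μ[Z|m] ω) ∂μ = 0 := by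
  have hZ1 : Integrable Z μ := hZ.integrable one_le_two
  have hres : MemLp (Z - μ[Z|m]) 2 μ := hZ.sub (hZ.condExp one_le_two)
  calc ∫ ω, Y ω * (Z ω - μ[Z|m] ω) ∂μ
      = ∫ ω, μ[Y * (Z - μ[Z|m]) | m] ω ∂μ := (integral_condExp hm).symm
    _ = ∫ ω, (Y * μ[Z - μ[Z|m] | m]) ω ∂μ := integral_congr_ae <|
      condExp_mul_of_aestronglyMeasurable_left hY (hY2.integrable_mul hres)
        (hres.integrable one_le_two)
    _ = ∫ _, (0 : ℝ) ∂μ := integral_congr_ae <| by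
      filter_upwards [condExp_sub_condExp_ae_eq_zero hm hZ1] with ω hω
      simp [hω]
    _ = 0 := integral_zero Ω ℝ

theorem expCondVar_eq_expCondVar_add_integral_sq_of_le {G F : MeasurableSpace Ω}
    [IsFiniteMeasure μ] (hGF : G ≤ F) (hF : F ≤ m0) {Z : Ω → ℝ} (hZ : MemLp Z 2 μ) :
    expCondVar μ G Z = expCondVar μ F Z + ∫ ω, (μ[Z|F] ω - μ[Z|G] ω) ^ 2 ∂μ := by
  have hF2 : MemLp (μ[Z|F]) 2 μ := hZ.condExp one_le_two
  have hG2 : MemLp (μ[Z|G]) 2 μ := hZ.condExp one_le_two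
  have hdiff_meas : AEStronglyMeasurable[F] (μ[Z|F] - μ[Z|G]) μ :=
    (stronglyMeasurable_condExp.sub (stronglyMeasurable_condExp.mono hGF)).aestronglyMeasurable
  have horth : ∫ ω, (Z ω - μ[Z|F] ω) * (μ[Z|F] ω - μ[Z|G] ω) ∂μ = 0 := by
    simp_rw [mul_comm (Z _ - _)]
    exact integral_mul_sub_condExp_eq_zero hF hdiff_meas (hF2.sub hG2) hZ
  have hpyth := integral_add_sq_of_integral_mul_eq_zero (f := fun ω => Z ω - μ[Z|F] ω)
    (g := fun ω => μ[Z|F] ω - μ[Z|G] ω) (hZ.sub hF2) (hF2.sub hG2) horth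
  simpa only [expCondVar, sub_add_sub_cancel] using hpyth

theorem integral_sq_sub_eq_zero_iff_ae_eq {f g : Ω → ℝ} (hf : MemLp f 2 μ) (hg : MemLp g 2 μ) :
    ∫ ω, (f ω - g ω) ^ 2 ∂μ = 0 ↔ f =ᵐ[μ] g := by
  rw [integral_eq_zero_iff_of_nonneg (fun ω => sq_nonneg (f ω - g ω)) (hf.sub hg).integrable_sq]
  simp only [Filter.EventuallyEq, Pi.zero_apply, ne_eq, OfNat.ofNat_ne_zero, not_false_eq_true,
    pow_eq_zero_iff, sub_eq_zero]

end

/-- For nested sub-σ-algebras `𝒢 ⊆ ℱ ⊆ ℱ₀` and square-integrable `Z`,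
`E[Var(Z | ℱ)] = E[Var(Z | 𝒢)]` if and only if `E[Z | ℱ] = E[Z | 𝒢]` almost surely. -/
theorem expCondVar_eq_iff_condexp_ae_eq
    {Ω : Type*} {F0 : MeasurableSpace Ω} (μ : Measure Ω) [IsProbabilityMeasure μ]
    (G F : MeasurableSpace Ω) (hGF : G ≤ F) (hF : F ≤ F0)
    (Z : Ω → ℝ) (hZ : MemLp Z 2 μ) :
    expCondVar μ F Z = expCondVar μ G Z ↔ μ[Z|F] =ᵐ[μ] μ[Z|G] := by
  rw [expCondVar_eq_expCondVar_add_integral_sq_of_le hGF hF hZ, left_eq_add]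
  exact integral_sq_sub_eq_zero_iff_ae_eq (hZ.condExp one_le_two) (hZ.condExp one_le_two)
end

section
/- Let n, p, q be positive integers, let Φ be a real n × p matrix and Ψ a real n × q matrix (interpreted as centered feature and response matrices whose rows are samples), and let ε > 0. Define the empirical covariance matrices Σ̂_XX = (1/n) Φᵀ Φ, Σ̂_XY = (1/n) Φᵀ Ψ, Σ̂_YX = (1/n) Ψᵀ Φ, Σ̂_YY = (1/n) Ψᵀ Ψ, and the Gram matrices G_X = Φ Φᵀ and G_Y = Ψ Ψᵀ. Then Tr[Σ̂_YY − Σ̂_YX (Σ̂_XX + ε I_p)⁻¹ Σ̂_XY] = ε · Tr[G_Y (G_X + n ε I_n)⁻¹], where all inverses exist since the matrices being inverted are positive definite. -/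
/-!
Push-through identity: with `A = ΦᵀΦ + cI` and `B = ΦΦᵀ + cI` one has `BΦ = ΦA`, hence
`ΦA⁻¹ = B⁻¹Φ` and `ΦA⁻¹Φᵀ = B⁻¹(B - cI) = I - cB⁻¹`. Sandwiching between `Ψᵀ` and `Ψ` gives
`ΨᵀΨ - ΨᵀΦA⁻¹ΦᵀΨ = c ΨᵀB⁻¹Ψ`, and the trace is cyclic. Taking `c = nε`, the empirical
covariances are `1/n` times the `c`-versions, and the factors of `n` cancel.
-/

open Matrix

variable {m k : Type*} [Fintype m] [Fintype k]

open scoped ComplexOrder in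
theorem Matrix.posDef_conjTranspose_mul_self_add_smul_one [DecidableEq k] {𝕜 : Type*} [RCLike 𝕜]
    (A : Matrix m k 𝕜) {c : ℝ} (hc : 0 < c) : (Aᴴ * A + c • (1 : Matrix k k 𝕜)).PosDef :=
  PosDef.posSemidef_add (posSemidef_conjTranspose_mul_self A) (PosDef.one.smul hc)

section CommRing

variable [DecidableEq m] [DecidableEq k] {R : Type*} [CommRing R]

theorem Matrix.mul_inv_mul_add_smul_one
    (M : Matrix m k R) (N : Matrix k m R) (c : R)
    (hA : IsUnit (N * M + c • (1 : Matrix k k R)).det)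
    (hB : IsUnit (M * N + c • (1 : Matrix m m R)).det) :
    M * (N * M + c • (1 : Matrix k k R))⁻¹ * N = 1 - c • (M * N + c • (1 : Matrix m m R))⁻¹ := by
  set A := N * M + c • (1 : Matrix k k R)
  set B := M * N + c • (1 : Matrix m m R)
  have push : B * M = M * A := by
    simp only [B, A, Matrix.add_mul, Matrix.mul_add, Matrix.mul_assoc, smul_mul, Matrix.mul_smul,
      Matrix.one_mul, Matrix.mul_one]
  have push_inv : M * A⁻¹ = B⁻¹ * M := by
    calc M * A⁻¹ = B⁻¹ * (B * M) * A⁻¹ := by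
          rw [← Matrix.mul_assoc, nonsing_inv_mul _ hB, Matrix.one_mul]
      _ = B⁻¹ * M := by
          rw [push, Matrix.mul_assoc, Matrix.mul_assoc, mul_nonsing_inv _ hA, Matrix.mul_one]
  calc M * A⁻¹ * N = B⁻¹ * (B - c • 1) := by
        rw [push_inv, Matrix.mul_assoc, add_sub_cancel_right]
    _ = 1 - c • B⁻¹ := by
        rw [Matrix.mul_sub, nonsing_inv_mul _ hB, Matrix.mul_smul, Matrix.mul_one]

theorem Matrix.trace_sub_mul_inv_mul_add_smul_one {l : Type*} [Fintype l]
    (Φ : Matrix m k R) (Ψ : Matrix m l R) (c : R)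
    (hA : IsUnit (Φᵀ * Φ + c • (1 : Matrix k k R)).det)
    (hB : IsUnit (Φ * Φᵀ + c • (1 : Matrix m m R)).det) :
    (Ψᵀ * Ψ - Ψᵀ * Φ * (Φᵀ * Φ + c • (1 : Matrix k k R))⁻¹ * (Φᵀ * Ψ)).trace
      = c * (Ψ * Ψᵀ * (Φ * Φᵀ + c • (1 : Matrix m m R))⁻¹).trace := by
  calc (Ψᵀ * Ψ - Ψᵀ * Φ * (Φᵀ * Φ + c • 1)⁻¹ * (Φᵀ * Ψ)).trace
      = (Ψᵀ * (1 - Φ * (Φᵀ * Φ + c • 1)⁻¹ * Φᵀ) * Ψ).trace := by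
        simp only [Matrix.mul_sub, Matrix.sub_mul, Matrix.mul_one, Matrix.mul_assoc]
    _ = c * (Ψ * Ψᵀ * (Φ * Φᵀ + c • 1)⁻¹).trace := by
        rw [mul_inv_mul_add_smul_one Φ Φᵀ c hA hB, sub_sub_cancel, Matrix.mul_smul, smul_mul,
          trace_smul, trace_mul_cycle, smul_eq_mul]

end CommRing

theorem empirical_conditional_covariance_trace_identity_general
    (n p q : ℕ) (hn : 0 < n)
    (Φ : Matrix (Fin n) (Fin p) ℝ) (Ψ : Matrix (Fin n) (Fin q) ℝ)
    (ε : ℝ) (hε : 0 < ε) :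
    ((n : ℝ)⁻¹ • (Φᵀ * Φ) + ε • (1 : Matrix (Fin p) (Fin p) ℝ)).PosDef ∧
    (Φ * Φᵀ + ((n : ℝ) * ε) • (1 : Matrix (Fin n) (Fin n) ℝ)).PosDef ∧
    ((n : ℝ)⁻¹ • (Ψᵀ * Ψ)
        - ((n : ℝ)⁻¹ • (Ψᵀ * Φ))
            * ((n : ℝ)⁻¹ • (Φᵀ * Φ) + ε • (1 : Matrix (Fin p) (Fin p) ℝ))⁻¹
            * ((n : ℝ)⁻¹ • (Φᵀ * Ψ))).trace
      = ε * ((Ψ * Ψᵀ)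
          * (Φ * Φᵀ + ((n : ℝ) * ε) • (1 : Matrix (Fin n) (Fin n) ℝ))⁻¹).trace := by
  have hn₀ : (n : ℝ) ≠ 0 := Nat.cast_ne_zero.2 hn.ne'
  have hc : 0 < (n : ℝ) * ε := mul_pos (Nat.cast_pos.2 hn) hε
  have hA := posDef_conjTranspose_mul_self_add_smul_one Φ hc
  have hB := posDef_conjTranspose_mul_self_add_smul_one Φᵀ hc
  simp only [conjTranspose_eq_transpose_of_trivial, transpose_transpose] at hA hB
  have hscale : (n : ℝ)⁻¹ • (Φᵀ * Φ) + ε • (1 : Matrix (Fin p) (Fin p) ℝ)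
      = (n : ℝ)⁻¹ • (Φᵀ * Φ + ((n : ℝ) * ε) • 1) := by
    rw [smul_add, smul_smul, inv_mul_cancel_left₀ hn₀]
  have hinv : ((n : ℝ)⁻¹ • (Φᵀ * Φ + ((n : ℝ) * ε) • 1))⁻¹
      = (n : ℝ) • (Φᵀ * Φ + ((n : ℝ) * ε) • (1 : Matrix (Fin p) (Fin p) ℝ))⁻¹ :=
    inv_eq_left_inv <| by
      rw [smul_mul, Matrix.mul_smul, smul_smul, mul_inv_cancel₀ hn₀, one_smul,
        nonsing_inv_mul _ hA.det_pos.ne'.isUnit]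
  refine ⟨hscale ▸ hA.smul (inv_pos.2 (Nat.cast_pos.2 hn)), hB, ?_⟩
  rw [hscale, hinv]
  simp only [smul_mul, Matrix.mul_smul, smul_smul, inv_mul_cancel_left₀ hn₀, ← smul_sub,
    trace_smul, smul_eq_mul]
  rw [trace_sub_mul_inv_mul_add_smul_one Φ Ψ _ hA.det_pos.ne'.isUnit hB.det_pos.ne'.isUnit,
    mul_assoc, inv_mul_cancel_left₀ hn₀]

/-- The regularized empirical estimate of the trace of the conditional covariance
operator can be computed from Gram matrices: with `Σ̂_XX = (1/n) Φᵀ Φ`,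
`Σ̂_XY = (1/n) Φᵀ Ψ`, `Σ̂_YX = (1/n) Ψᵀ Φ`, `Σ̂_YY = (1/n) Ψᵀ Ψ`, `G_X = Φ Φᵀ` and
`G_Y = Ψ Ψᵀ`, one has
`Tr[Σ̂_YY − Σ̂_YX (Σ̂_XX + ε I_p)⁻¹ Σ̂_XY] = ε Tr[G_Y (G_X + n ε I_n)⁻¹]`,
the matrices being inverted being positive definite (hence invertible). -/
theorem empirical_conditional_covariance_trace_identity
    (n p q : ℕ) (hn : 0 < n) (hp : 0 < p) (hq : 0 < q)
    (Φ : Matrix (Fin n) (Fin p) ℝ) (Ψ : Matrix (Fin n) (Fin q) ℝ)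
    (ε : ℝ) (hε : 0 < ε) :
    ((n : ℝ)⁻¹ • (Φᵀ * Φ) + ε • (1 : Matrix (Fin p) (Fin p) ℝ)).PosDef ∧
    (Φ * Φᵀ + ((n : ℝ) * ε) • (1 : Matrix (Fin n) (Fin n) ℝ)).PosDef ∧
    ((n : ℝ)⁻¹ • (Ψᵀ * Ψ)
        - ((n : ℝ)⁻¹ • (Ψᵀ * Φ))
            * ((n : ℝ)⁻¹ • (Φᵀ * Φ) + ε • (1 : Matrix (Fin p) (Fin p) ℝ))⁻¹
            * ((n : ℝ)⁻¹ • (Φᵀ * Ψ))).trace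
      = ε * ((Ψ * Ψᵀ)
          * (Φ * Φᵀ + ((n : ℝ) * ε) • (1 : Matrix (Fin n) (Fin n) ℝ))⁻¹).trace :=
  empirical_conditional_covariance_trace_identity_general n p q hn Φ Ψ ε hε
end
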